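/- arXiv:1303.4992 — 4 statements merged into one kernel-verified Lean document; each statement's English description precedes it below -/
import Mathlib

section
/- The comb function f_C : [0,∞) → ℝ defined by f_C(x) = Σ_{n=1}^∞ e^{n/2} · χ_{[n − e^{−n}, n + e^{−n}]}(x) is essentially rapidly decaying (for every m ∈ ℕ, x ↦ x^m f_C(x) is integrable) but is unbounded; moreover f_C² is not essentially rapidly decaying. -/
open MeasureTheory

/-! The `N`-th tooth of the comb has height `e^{(N+1)/2}` and width `2e^{-(N+1)}`, and the
teeth are disjoint. Against `x^m` the `N`-th tooth contributes at most `2 (N+2)^m e^{-(N+1)/2}`,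
a summable sequence, so `f_C` is ERD; its height is unbounded; but every tooth of `f_C²` has
integral `e^{N+1} · 2e^{-(N+1)} = 2`, so `f_C²` is not even integrable. -/

/-- The comb function `f_C(x) = Σ_{n=1}^∞ e^{n/2} χ_{[n - e^{-n}, n + e^{-n}]}(x)`. -/
noncomputable def combF (x : ℝ) : ℝ :=
  ∑' N : ℕ, Real.exp ((N + 1 : ℝ) / 2) *
    Set.indicator
      (Set.Icc ((N + 1 : ℝ) - Real.exp (-(N + 1 : ℝ))) ((N + 1 : ℝ) + Real.exp (-(N + 1 : ℝ))))
      (fun _ => (1 : ℝ)) x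

open Real Set

noncomputable def combTooth (N : ℕ) : Set ℝ :=
  Icc ((N + 1 : ℝ) - exp (-(N + 1 : ℝ))) ((N + 1 : ℝ) + exp (-(N + 1 : ℝ)))

lemma exp_neg_succ_lt_half (N : ℕ) : exp (-(N + 1 : ℝ)) < 1 / 2 := by
  have hN : exp (-(N + 1 : ℝ)) ≤ exp (-1) :=
    exp_le_exp.2 (by linarith [N.cast_nonneg (α := ℝ)])
  have he : exp (-1) < 1 / 2 := by
    rw [exp_neg, inv_lt_comm₀ (exp_pos 1) (by norm_num)]
    linarith [exp_one_gt_d9]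
  linarith

lemma measurableSet_combTooth (N : ℕ) : MeasurableSet (combTooth N) := measurableSet_Icc

lemma combTooth_subset_Ioo (N : ℕ) :
    combTooth N ⊆ Ioo ((N : ℝ) + 1 / 2) ((N : ℝ) + 3 / 2) :=
  Icc_subset_Ioo (by linarith [exp_neg_succ_lt_half N]) (by linarith [exp_neg_succ_lt_half N])

lemma combTooth_subset_Ici (N : ℕ) : combTooth N ⊆ Ici 0 := fun _ hx ↦
  le_of_lt <| lt_trans (by positivity) (combTooth_subset_Ioo N hx).1

lemma pairwise_disjoint_combTooth : Pairwise (Function.onFun Disjoint combTooth) := by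
  intro N M hNM
  wlog h : N < M generalizing N M
  · exact (this hNM.symm (hNM.lt_or_gt.resolve_left h)).symm
  have hNM : (N : ℝ) + 1 ≤ M := by exact_mod_cast h
  refine Set.disjoint_left.2 fun x hxN hxM ↦ ?_
  linarith [(combTooth_subset_Ioo N hxN).2, (combTooth_subset_Ioo M hxM).1]

lemma volume_real_combTooth (N : ℕ) : volume.real (combTooth N) = 2 * exp (-(N + 1 : ℝ)) := by
  rw [combTooth, volume_real_Icc_of_le (by linarith [exp_pos (-(N + 1 : ℝ))])]
  ring

lemma combF_eq_tsum_indicator_combTooth (x : ℝ) :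
    combF x = ∑' N : ℕ, exp ((N + 1 : ℝ) / 2) * (combTooth N).indicator (fun _ ↦ 1) x := rfl

lemma combF_of_mem_combTooth {N : ℕ} {x : ℝ} (hx : x ∈ combTooth N) :
    combF x = exp ((N + 1 : ℝ) / 2) := by
  rw [combF_eq_tsum_indicator_combTooth, tsum_eq_single N, indicator_of_mem hx, mul_one]
  intro M hMN
  rw [indicator_of_notMem (Set.disjoint_left.1 (pairwise_disjoint_combTooth hMN.symm) hx), mul_zero]

lemma combF_of_notMem_iUnion_combTooth {x : ℝ} (hx : x ∉ ⋃ N, combTooth N) : combF x = 0 := by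
  rw [combF_eq_tsum_indicator_combTooth]
  simp_all

lemma norm_pow_mul_combF_le {N : ℕ} {x : ℝ} (hx : x ∈ combTooth N) (m : ℕ) :
    ‖x ^ m * combF x‖ ≤ ((N : ℝ) + 2) ^ m * exp ((N + 1 : ℝ) / 2) := by
  have hx₀ : 0 ≤ x := combTooth_subset_Ici N hx
  have hx₁ : x ≤ N + 2 := by linarith [(combTooth_subset_Ioo N hx).2]
  rw [combF_of_mem_combTooth hx, norm_mul, norm_pow, norm_of_nonneg hx₀,
    norm_of_nonneg (exp_pos _).le]
  gcongr

-- The bound is `2√e · a (N + 2)` with `a n = n^m e^{-n/2}`, the shape of a shifted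
-- `summable_pow_mul_exp_neg_nat_mul`.
lemma integral_norm_pow_mul_combF_le (m N : ℕ) :
    ∫ x in combTooth N, ‖x ^ m * combF x‖ ≤ 2 * exp (1 / 2) * (((N + 2 : ℕ) : ℝ) ^ m *
      exp (-(1 / 2) * (N + 2 : ℕ))) := by
  have hvol : volume (combTooth N) < ⊤ := measure_Icc_lt_top
  calc ∫ x in combTooth N, ‖x ^ m * combF x‖
      ≤ ((N : ℝ) + 2) ^ m * exp ((N + 1 : ℝ) / 2) * volume.real (combTooth N) :=
        (le_abs_self _).trans <| norm_setIntegral_le_of_norm_le_const hvol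
          fun x hx ↦ (norm_norm _).trans_le (norm_pow_mul_combF_le hx m)
    _ = 2 * exp (1 / 2) * (((N + 2 : ℕ) : ℝ) ^ m * exp (-(1 / 2) * (N + 2 : ℕ))) := by
        rw [volume_real_combTooth]
        push_cast
        have hexp : exp ((N + 1 : ℝ) / 2) * exp (-(N + 1 : ℝ)) =
            exp (1 / 2) * exp (-(1 / 2) * (N + 2)) := by
          rw [← exp_add, ← exp_add]; ring_nf
        linear_combination 2 * ((N : ℝ) + 2) ^ m * hexp

lemma integrableOn_Ici_pow_mul_combF (m : ℕ) :
    IntegrableOn (fun x ↦ x ^ m * combF x) (Ici 0) := by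
  have hteeth : IntegrableOn (fun x ↦ x ^ m * combF x) (⋃ N, combTooth N) := by
    refine integrableOn_iUnion_of_summable_integral_norm (fun N ↦ ?_) ?_
    · have hcont : Continuous fun x : ℝ ↦ x ^ m * exp ((N + 1 : ℝ) / 2) := by fun_prop
      refine hcont.integrableOn_Icc.congr_fun (fun x hx ↦ ?_) (measurableSet_combTooth N)
      rw [combF_of_mem_combTooth hx]
    · have hsum := ((summable_nat_add_iff 2).2
        (summable_pow_mul_exp_neg_nat_mul m one_half_pos)).mul_left (2 * exp (1 / 2))
      exact hsum.of_nonneg_of_le (fun N ↦ integral_nonneg fun _ ↦ norm_nonneg _)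
        (integral_norm_pow_mul_combF_le m)
  exact hteeth.of_forall_sdiff_eq_zero measurableSet_Ici
    fun x hx ↦ by rw [combF_of_notMem_iUnion_combTooth hx.2, mul_zero]

lemma exists_lt_combF (M : ℝ) : ∃ x : ℝ, 0 ≤ x ∧ M < combF x := by
  obtain ⟨N, hN⟩ := exists_nat_gt (2 * M)
  have hmem : (N + 1 : ℝ) ∈ combTooth N :=
    ⟨by linarith [exp_pos (-(N + 1 : ℝ))], by linarith [exp_pos (-(N + 1 : ℝ))]⟩
  refine ⟨N + 1, by positivity, ?_⟩
  rw [combF_of_mem_combTooth hmem]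
  linarith [add_one_le_exp ((N + 1 : ℝ) / 2)]

lemma integral_combTooth_combF_sq (N : ℕ) : ∫ x in combTooth N, combF x ^ 2 = 2 := by
  have hsq : ∀ x ∈ combTooth N, combF x ^ 2 = exp (N + 1 : ℝ) := fun x hx ↦ by
    rw [combF_of_mem_combTooth hx, ← exp_nat_mul]; push_cast; ring_nf
  rw [setIntegral_congr_fun (measurableSet_combTooth N) hsq, setIntegral_const,
    volume_real_combTooth, smul_eq_mul, mul_assoc, ← exp_add, neg_add_cancel, exp_zero, mul_one]

lemma not_integrableOn_Ici_combF_sq : ¬ IntegrableOn (fun x ↦ combF x ^ 2) (Ici 0) := by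
  intro h
  have hsum := (hasSum_integral_iUnion measurableSet_combTooth pairwise_disjoint_combTooth
    (h.mono_set (iUnion_subset combTooth_subset_Ici))).summable
  simp only [integral_combTooth_combF_sq] at hsum
  exact two_ne_zero (tendsto_nhds_unique tendsto_const_nhds hsum.tendsto_atTop_zero)

/-- the comb function is ERD on `[0,∞)` but unbounded, and its square
is not ERD. -/
theorem stmt_6 :
    (∀ m : ℕ, IntegrableOn (fun x => x ^ m * combF x) (Set.Ici (0 : ℝ))) ∧
    (∀ M : ℝ, ∃ x : ℝ, 0 ≤ x ∧ M < combF x) ∧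
    ¬ (∀ m : ℕ, IntegrableOn (fun x => x ^ m * (combF x) ^ 2) (Set.Ici (0 : ℝ))) :=
  ⟨integrableOn_Ici_pow_mul_combF, exists_lt_combF,
    fun h ↦ not_integrableOn_Ici_combF_sq (by simpa using h 0)⟩
end

section
/- Let a : ℝ → (0,∞) be smooth, H = ȧ/a, and ω_k(t)² = k²/a(t)² + m². Suppose ȷ : ℝ → (0,∞) is smooth and satisfies the consistency equation 2ȷ(2ω_k²ȷ + 3H ȷ̇ + ȷ̈) = c_k/a⁶ + ȷ̇² for a constant c_k > 0. Define θ by θ̇(t) = √c_k / (2 ȷ(t) a(t)³) and q(t) = √(ȷ(t)/√c_k) · e^{iθ(t)}. Then q solves the temporal Klein–Gordon equation q̈ + 3H q̇ + ω_k² q = 0 and the normalization condition q̄ q̇ − q q̄̇ = i a⁻³ (equivalently, Im(q̄ q̇) = 1/(2a³)). -/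
private lemma alg_aux (j jp jpp av ap s k m R : ℝ) (hs : 0 < s) (ha : 0 < av) (hR : 0 < R)
    (hj0 : 0 < j) (hjR : s * R ^ 2 = j)
    (hcons : 2 * j * (2 * (k ^ 2 / av ^ 2 + m ^ 2) * j + 3 * (ap / av) * jp + jpp)
      = s ^ 2 / av ^ 6 + jp ^ 2) :
    ((jpp / s * (2 * R) - jp / s * (2 * (jp / s / (2 * R)))) / (2 * R) ^ 2
        - (s / (2 * j * av ^ 3)) ^ 2 * R + 3 * (ap / av) * (jp / s / (2 * R))
        + (k ^ 2 / av ^ 2 + m ^ 2) * R = 0)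
    ∧ ((0 * (2 * j * av ^ 3) - s * (2 * jp * av ^ 3 + 2 * j * (3 * av ^ 2 * ap)))
          / (2 * j * av ^ 3) ^ 2 * R
        + 2 * (s / (2 * j * av ^ 3)) * (jp / s / (2 * R))
        + 3 * (ap / av) * (s / (2 * j * av ^ 3)) * R = 0) := by
  subst hjR
  constructor
  · have key : ((jpp / s * (2 * R) - jp / s * (2 * (jp / s / (2 * R)))) / (2 * R) ^ 2
        - (s / (2 * (s * R ^ 2) * av ^ 3)) ^ 2 * R + 3 * (ap / av) * (jp / s / (2 * R))
        + (k ^ 2 / av ^ 2 + m ^ 2) * R) * (4 * s ^ 2 * R ^ 3)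
        = 2 * (s * R ^ 2) * (2 * (k ^ 2 / av ^ 2 + m ^ 2) * (s * R ^ 2)
            + 3 * (ap / av) * jp + jpp) - (s ^ 2 / av ^ 6 + jp ^ 2) := by
      field_simp
      ring
    have h4 : (4 : ℝ) * s ^ 2 * R ^ 3 ≠ 0 := by positivity
    have h0 : _ = (0:ℝ) := key.trans (by rw [hcons]; ring)
    exact (mul_eq_zero.mp h0).resolve_right h4
  · field_simp
    ring

/-- for `c_k > 0`, the seed solution
`q(t) = √(ȷ(t)/√c_k) e^{iθ(t)}` with `θ̇ = √c_k/(2 ȷ a³)`, where `ȷ > 0` solves the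
consistency equation, solves the temporal Klein–Gordon equation and the Wronskian
normalization condition. -/
theorem stmt_10 (a j θ : ℝ → ℝ) (k m c : ℝ) (hk : 0 ≤ k) (hm : 0 ≤ m)
    (ha : ContDiff ℝ (⊤ : ℕ∞) a) (hapos : ∀ t, 0 < a t)
    (hj : ContDiff ℝ (⊤ : ℕ∞) j) (hjpos : ∀ t, 0 < j t)
    (hc : 0 < c)
    (hθ : Differentiable ℝ θ)
    (hθ' : ∀ t, deriv θ t = Real.sqrt c / (2 * j t * a t ^ 3))
    (hcons : ∀ t, 2 * j t * (2 * (k ^ 2 / a t ^ 2 + m ^ 2) * j t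
        + 3 * (deriv a t / a t) * deriv j t + deriv (deriv j) t)
      = c / a t ^ 6 + (deriv j t) ^ 2)
    (q : ℝ → ℂ)
    (hq : ∀ t, q t = ((Real.sqrt (j t / Real.sqrt c) : ℝ) : ℂ)
        * Complex.exp (Complex.I * ((θ t : ℝ) : ℂ))) :
    ∀ t, (deriv (deriv q) t + ((3 * (deriv a t / a t) : ℝ) : ℂ) * deriv q t
        + ((k ^ 2 / a t ^ 2 + m ^ 2 : ℝ) : ℂ) * q t = 0) ∧
      (starRingEnd ℂ (q t) * deriv q t - q t * starRingEnd ℂ (deriv q t)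
        = Complex.I / ((a t ^ 3 : ℝ) : ℂ)) := by
  have hsc : 0 < Real.sqrt c := Real.sqrt_pos.mpr hc
  have hcs : Real.sqrt c ^ 2 = c := Real.sq_sqrt hc.le
  have hadiff : Differentiable ℝ a := ha.differentiable (by simp)
  have hjdiff : Differentiable ℝ j := hj.differentiable (by simp)
  have hj2 : Differentiable ℝ (deriv j) :=
    ((contDiff_infty_iff_deriv.mp (hj.of_le (by simp))).2).differentiable
      (by simp)
  -- real amplitude and its derivatives
  have hRpos : ∀ u, 0 < Real.sqrt (j u / Real.sqrt c) := fun u =>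
    Real.sqrt_pos.mpr (div_pos (hjpos u) hsc)
  have hRsq : ∀ u, Real.sqrt c * Real.sqrt (j u / Real.sqrt c) ^ 2 = j u := fun u => by
    rw [Real.sq_sqrt (div_pos (hjpos u) hsc).le]; field_simp
  have hRd : ∀ u, HasDerivAt (fun v => Real.sqrt (j v / Real.sqrt c))
      (deriv j u / Real.sqrt c / (2 * Real.sqrt (j u / Real.sqrt c))) u := fun u =>
    (((hjdiff u).hasDerivAt).div_const (Real.sqrt c)).sqrt (div_pos (hjpos u) hsc).ne'
  have hR'd : ∀ u, HasDerivAt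
      (fun v => deriv j v / Real.sqrt c / (2 * Real.sqrt (j v / Real.sqrt c)))
      ((deriv (deriv j) u / Real.sqrt c * (2 * Real.sqrt (j u / Real.sqrt c))
          - deriv j u / Real.sqrt c
            * (2 * (deriv j u / Real.sqrt c / (2 * Real.sqrt (j u / Real.sqrt c)))))
        / (2 * Real.sqrt (j u / Real.sqrt c)) ^ 2) u := fun u =>
    (((hj2 u).hasDerivAt).div_const (Real.sqrt c)).div ((hRd u).const_mul 2)
      (by have := hRpos u; positivity)
  -- phase velocity and its derivative
  have hgd : ∀ u, HasDerivAt (fun v => 2 * j v * a v ^ 3)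
      (2 * deriv j u * a u ^ 3 + 2 * j u * (3 * a u ^ 2 * deriv a u)) u := by
    intro u
    have h1 : HasDerivAt (fun v => 2 * j v) (2 * deriv j u) u :=
      ((hjdiff u).hasDerivAt).const_mul 2
    have h2 : HasDerivAt (fun v => a v ^ 3) (3 * a u ^ 2 * deriv a u) u := by
      simpa using ((hadiff u).hasDerivAt).fun_pow 3
    exact h1.mul h2
  have hgne : ∀ u, 2 * j u * a u ^ 3 ≠ 0 := fun u => by
    have := hjpos u; have := hapos u; positivity
  have hΘd : ∀ u, HasDerivAt (fun v => Real.sqrt c / (2 * j v * a v ^ 3))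
      ((0 * (2 * j u * a u ^ 3) - Real.sqrt c
          * (2 * deriv j u * a u ^ 3 + 2 * j u * (3 * a u ^ 2 * deriv a u)))
        / (2 * j u * a u ^ 3) ^ 2) u := fun u =>
    (hasDerivAt_const u (Real.sqrt c)).div (hgd u) (hgne u)
  have hθd : ∀ u, HasDerivAt θ (Real.sqrt c / (2 * j u * a u ^ 3)) u := fun u =>
    (hθ' u) ▸ (hθ u).hasDerivAt
  -- the function and its first derivative
  have hqfun : q = fun u => ((Real.sqrt (j u / Real.sqrt c) : ℝ) : ℂ)
      * Complex.exp (Complex.I * ((θ u : ℝ) : ℂ)) := funext hq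
  have hEd : ∀ u, HasDerivAt (fun v => Complex.exp (Complex.I * ((θ v : ℝ) : ℂ)))
      (Complex.exp (Complex.I * ((θ u : ℝ) : ℂ))
        * (Complex.I * ((Real.sqrt c / (2 * j u * a u ^ 3) : ℝ) : ℂ))) u := fun u =>
    (((hθd u).ofReal_comp).const_mul Complex.I).cexp
  have hqd : ∀ u, HasDerivAt q
      (((deriv j u / Real.sqrt c / (2 * Real.sqrt (j u / Real.sqrt c)) : ℝ) : ℂ)
          * Complex.exp (Complex.I * ((θ u : ℝ) : ℂ))
        + ((Real.sqrt (j u / Real.sqrt c) : ℝ) : ℂ)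
          * (Complex.exp (Complex.I * ((θ u : ℝ) : ℂ))
            * (Complex.I * ((Real.sqrt c / (2 * j u * a u ^ 3) : ℝ) : ℂ)))) u := fun u => by
    rw [hqfun]
    exact ((hRd u).ofReal_comp).mul (hEd u)
  have hdq : deriv q = fun u =>
      ((deriv j u / Real.sqrt c / (2 * Real.sqrt (j u / Real.sqrt c)) : ℝ) : ℂ)
          * Complex.exp (Complex.I * ((θ u : ℝ) : ℂ))
        + ((Real.sqrt (j u / Real.sqrt c) : ℝ) : ℂ)
          * (Complex.exp (Complex.I * ((θ u : ℝ) : ℂ))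
            * (Complex.I * ((Real.sqrt c / (2 * j u * a u ^ 3) : ℝ) : ℂ))) :=
    funext fun u => (hqd u).deriv
  intro t
  have hja : 0 < j t := hjpos t
  have haa : 0 < a t := hapos t
  have hRp : 0 < Real.sqrt (j t / Real.sqrt c) := hRpos t
  -- second derivative at t
  have hq2 : HasDerivAt (deriv q)
      ((((deriv (deriv j) t / Real.sqrt c * (2 * Real.sqrt (j t / Real.sqrt c))
            - deriv j t / Real.sqrt c
              * (2 * (deriv j t / Real.sqrt c / (2 * Real.sqrt (j t / Real.sqrt c)))))
          / (2 * Real.sqrt (j t / Real.sqrt c)) ^ 2 : ℝ) : ℂ)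
            * Complex.exp (Complex.I * ((θ t : ℝ) : ℂ))
        + ((deriv j t / Real.sqrt c / (2 * Real.sqrt (j t / Real.sqrt c)) : ℝ) : ℂ)
            * (Complex.exp (Complex.I * ((θ t : ℝ) : ℂ))
              * (Complex.I * ((Real.sqrt c / (2 * j t * a t ^ 3) : ℝ) : ℂ)))
        + (((deriv j t / Real.sqrt c / (2 * Real.sqrt (j t / Real.sqrt c)) : ℝ) : ℂ)
            * (Complex.exp (Complex.I * ((θ t : ℝ) : ℂ))
              * (Complex.I * ((Real.sqrt c / (2 * j t * a t ^ 3) : ℝ) : ℂ)))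
          + ((Real.sqrt (j t / Real.sqrt c) : ℝ) : ℂ)
            * ((Complex.exp (Complex.I * ((θ t : ℝ) : ℂ))
                  * (Complex.I * ((Real.sqrt c / (2 * j t * a t ^ 3) : ℝ) : ℂ)))
                * (Complex.I * ((Real.sqrt c / (2 * j t * a t ^ 3) : ℝ) : ℂ))
              + Complex.exp (Complex.I * ((θ t : ℝ) : ℂ))
                * (Complex.I * (((0 * (2 * j t * a t ^ 3) - Real.sqrt c
                    * (2 * deriv j t * a t ^ 3 + 2 * j t * (3 * a t ^ 2 * deriv a t)))
                  / (2 * j t * a t ^ 3) ^ 2 : ℝ) : ℂ))))) t := by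
    rw [hdq]
    exact (((hR'd t).ofReal_comp).mul (hEd t)).add
      (((hRd t).ofReal_comp).mul
        ((hEd t).mul (((hΘd t).ofReal_comp).const_mul Complex.I)))
  have hene : Complex.exp (Complex.I * ((θ t : ℝ) : ℂ)) ≠ 0 := Complex.exp_ne_zero _
  have hee : Complex.exp (Complex.I * ((θ t : ℝ) : ℂ))
      * (Complex.exp (Complex.I * ((θ t : ℝ) : ℂ)))⁻¹ = 1 := mul_inv_cancel₀ hene
  obtain ⟨E1, E2⟩ := alg_aux (j t) (deriv j t) (deriv (deriv j) t) (a t) (deriv a t)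
    (Real.sqrt c) k m (Real.sqrt (j t / Real.sqrt c)) hsc haa hRp hja (hRsq t)
    (by rw [hcs]; exact hcons t)
  have E1C := congrArg (fun x : ℝ => (x : ℂ)) E1
  have E2C := congrArg (fun x : ℝ => (x : ℂ)) E2
  push_cast at E1C E2C
  have h2 : 2 * (Real.sqrt c / (2 * j t * a t ^ 3)) * Real.sqrt (j t / Real.sqrt c) ^ 2
      = 1 / a t ^ 3 := by
    rw [Real.sq_sqrt (div_pos hja hsc).le]
    field_simp
  have h2C := congrArg (fun x : ℝ => (x : ℂ)) h2
  push_cast at h2C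
  constructor
  · rw [hq2.deriv, hdq, hq t]
    push_cast
    linear_combination Complex.exp (Complex.I * ((θ t : ℝ) : ℂ)) * E1C
      + (Complex.I * Complex.exp (Complex.I * ((θ t : ℝ) : ℂ))) * E2C
      + (((Real.sqrt (j t / Real.sqrt c) : ℝ) : ℂ)
          * ((Real.sqrt c : ℝ) : ℂ) ^ 2
          / (2 * ((j t : ℝ) : ℂ) * ((a t : ℝ) : ℂ) ^ 3) ^ 2
          * Complex.exp (Complex.I * ((θ t : ℝ) : ℂ))) * Complex.I_sq
  · rw [hdq, hq t]
    have hce : (starRingEnd ℂ) (Complex.exp (Complex.I * ((θ t : ℝ) : ℂ)))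
        = (Complex.exp (Complex.I * ((θ t : ℝ) : ℂ)))⁻¹ := by
      rw [← Complex.exp_conj, ← Complex.exp_neg]
      congr 1
      simp [map_mul, Complex.conj_ofReal]
    simp only [map_add, map_mul, Complex.conj_ofReal, Complex.conj_I, hce]
    push_cast
    linear_combination (2 * Complex.I
        * (((Real.sqrt c : ℝ) : ℂ) / (2 * ((j t : ℝ) : ℂ) * ((a t : ℝ) : ℂ) ^ 3))
        * ((Real.sqrt (j t / Real.sqrt c) : ℝ) : ℂ) ^ 2) * hee
      + Complex.I * h2C
end

section
/- Let a, H, ω_k be as before and c_k < 0. Suppose ȷ > 0 solves the consistency equation 2ȷ(2ω_k²ȷ + 3H ȷ̇ + ȷ̈) = c_k/a⁶ + ȷ̇². Define θ by θ̇(t) = √|c_k| / (2 ȷ(t) a(t)³) and q(t) = √(ȷ(t)/√|c_k|) · (cosh θ(t) + i sinh θ(t)). Then q solves q̈ + 3H q̇ + ω_k² q = 0 and the normalization condition q̄ q̇ − q q̄̇ = i a⁻³. -/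
set_option maxHeartbeats 2000000 in
/-- for `c_k < 0`, the seed solution
`q(t) = √(ȷ(t)/√|c_k|) (cosh θ(t) + i sinh θ(t))` with `θ̇ = √|c_k|/(2 ȷ a³)`, where `ȷ > 0`
solves the consistency equation, solves the temporal Klein–Gordon equation and the
Wronskian normalization condition. -/
theorem stmt_11 (a j θ : ℝ → ℝ) (k m c : ℝ) (hk : 0 ≤ k) (hm : 0 ≤ m)
    (ha : ContDiff ℝ (⊤ : ℕ∞) a) (hapos : ∀ t, 0 < a t)
    (hj : ContDiff ℝ (⊤ : ℕ∞) j) (hjpos : ∀ t, 0 < j t)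
    (hc : c < 0)
    (hθ : Differentiable ℝ θ)
    (hθ' : ∀ t, deriv θ t = Real.sqrt |c| / (2 * j t * a t ^ 3))
    (hcons : ∀ t, 2 * j t * (2 * (k ^ 2 / a t ^ 2 + m ^ 2) * j t
        + 3 * (deriv a t / a t) * deriv j t + deriv (deriv j) t)
      = c / a t ^ 6 + (deriv j t) ^ 2)
    (q : ℝ → ℂ)
    (hq : ∀ t, q t = ((Real.sqrt (j t / Real.sqrt |c|) : ℝ) : ℂ)
        * (((Real.cosh (θ t) : ℝ) : ℂ) + Complex.I * ((Real.sinh (θ t) : ℝ) : ℂ))) :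
    ∀ t, (deriv (deriv q) t + ((3 * (deriv a t / a t) : ℝ) : ℂ) * deriv q t
        + ((k ^ 2 / a t ^ 2 + m ^ 2 : ℝ) : ℂ) * q t = 0) ∧
      (starRingEnd ℂ (q t) * deriv q t - q t * starRingEnd ℂ (deriv q t)
        = Complex.I / ((a t ^ 3 : ℝ) : ℂ)) := by
  have hcabs : |c| = -c := abs_of_neg hc
  set s : ℝ := Real.sqrt |c| with hsdef
  have hspos : 0 < s := Real.sqrt_pos.2 (by rw [hcabs]; linarith)
  have hs2 : s ^ 2 = -c := by rw [hsdef, Real.sq_sqrt (abs_nonneg c), hcabs]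
  set F : ℝ → ℝ := fun t => Real.sqrt (j t / s) with hFdef
  have hFpos : ∀ t, 0 < F t := fun t => Real.sqrt_pos.2 (div_pos (hjpos t) hspos)
  have hF2 : ∀ t, F t ^ 2 = j t / s := fun t =>
    Real.sq_sqrt (le_of_lt (div_pos (hjpos t) hspos))
  have hadiff : Differentiable ℝ a := ha.differentiable (by simp)
  have hjdiff : Differentiable ℝ j := hj.differentiable (by simp)
  have hjinf : ContDiff ℝ (↑(⊤:ℕ∞)) j := hj.of_le (by simp)
  have hja : Differentiable ℝ (deriv j) :=
    ((contDiff_infty_iff_deriv.mp hjinf).2).differentiable (by simp)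
  have hθd : ∀ t, HasDerivAt θ (s / (2 * j t * a t ^ 3)) t := fun t =>
    hθ' t ▸ (hθ t).hasDerivAt
  have hFd : ∀ t, HasDerivAt F (deriv j t / s / (2 * F t)) t := by
    intro t
    have := (((hjdiff t).hasDerivAt).div_const s).sqrt
      (ne_of_gt (div_pos (hjpos t) hspos))
    exact this
  set D : ℝ → ℂ := fun t =>
    (((deriv j t / s / (2 * F t)) * Real.cosh (θ t)
      + F t * (Real.sinh (θ t) * (s / (2 * j t * a t ^ 3))) : ℝ) : ℂ)
    + Complex.I * (((deriv j t / s / (2 * F t)) * Real.sinh (θ t)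
      + F t * (Real.cosh (θ t) * (s / (2 * j t * a t ^ 3))) : ℝ) : ℂ) with hDdef
  have hqfun : q = fun t => ((F t * Real.cosh (θ t) : ℝ) : ℂ)
      + Complex.I * ((F t * Real.sinh (θ t) : ℝ) : ℂ) := by
    funext t
    rw [hq t]
    push_cast
    ring
  have hqD : ∀ t, HasDerivAt q (D t) t := by
    intro t
    rw [hqfun]
    have hu : HasDerivAt (fun t => F t * Real.cosh (θ t))
        ((deriv j t / s / (2 * F t)) * Real.cosh (θ t)
          + F t * (Real.sinh (θ t) * (s / (2 * j t * a t ^ 3)))) t :=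
      (hFd t).mul ((hθd t).cosh)
    have hv : HasDerivAt (fun t => F t * Real.sinh (θ t))
        ((deriv j t / s / (2 * F t)) * Real.sinh (θ t)
          + F t * (Real.cosh (θ t) * (s / (2 * j t * a t ^ 3)))) t :=
      (hFd t).mul ((hθd t).sinh)
    exact (hu.ofReal_comp).add ((hv.ofReal_comp).const_mul Complex.I)
  have hderq : deriv q = D := funext fun t => (hqD t).deriv
  intro t
  -- second derivative pieces
  have hg1 := (((hja t).hasDerivAt).div_const s).div ((hFd t).const_mul 2)
    (by have := hFpos t; positivity)
  have hden := (((hjdiff t).hasDerivAt).const_mul 2).mul (((hadiff t).hasDerivAt).pow 3)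
  have hg2 := (hasDerivAt_const t s).div hden
    (by have := hjpos t; have := hapos t; simp only [Pi.mul_apply, Pi.pow_apply]; positivity)
  have hP := (hg1.mul ((hθd t).cosh)).add ((hFd t).mul (((hθd t).sinh).mul hg2))
  have hQ := (hg1.mul ((hθd t).sinh)).add ((hFd t).mul (((hθd t).cosh).mul hg2))
  have hDD : HasDerivAt D _ t := (hP.ofReal_comp).add ((hQ.ofReal_comp).const_mul Complex.I)
  have h2 := hDD.deriv
  have hja0 : a t ≠ 0 := (hapos t).ne'
  have hjj0 : j t ≠ 0 := (hjpos t).ne'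
  have hFF0 : F t ≠ 0 := (hFpos t).ne'
  have hss0 : s ≠ 0 := hspos.ne'
  have hjF : j t = s * F t ^ 2 := by
    rw [hF2 t]; field_simp
  have hcs : c = -s ^ 2 := by linarith [hs2]
  have hJ'' : deriv (deriv j) t = (c / a t ^ 6 + (deriv j t) ^ 2) / (2 * j t)
      - 2 * (k ^ 2 / a t ^ 2 + m ^ 2) * j t - 3 * (deriv a t / a t) * deriv j t := by
    have hK := hcons t
    field_simp at hK ⊢
    linear_combination hK
  have hsqrt : ∀ u, Real.sqrt (j u / s) = F u := fun _ => rfl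
  clear_value s F D
  constructor
  · rw [hderq, h2, hq t, hsqrt, hDdef]
    rw [Complex.ext_iff]
    constructor <;>
    · simp only [Complex.add_re, Complex.add_im, Complex.mul_re, Complex.mul_im,
        Complex.ofReal_re, Complex.ofReal_im, Complex.I_re, Complex.I_im,
        Complex.zero_re, Complex.zero_im, Pi.mul_apply, Pi.div_apply, Pi.pow_apply]
      rw [hJ'', hcs, hjF]
      field_simp
      ring
  · rw [hderq]
    have hA0 : ((a t ^ 3 : ℝ) : ℂ) ≠ 0 := by
      exact_mod_cast pow_ne_zero 3 hja0
    rw [eq_div_iff hA0]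
    have hch := Real.cosh_sq_sub_sinh_sq (θ t)
    clear h2 hDD hP hQ hg1 hg2 hden
    simp only [hq, hsqrt, hDdef, map_add, map_mul, map_sub, Complex.conj_ofReal,
      Complex.conj_I]
    rw [Complex.ext_iff]
    constructor <;>
    · simp only [Complex.add_re, Complex.add_im, Complex.mul_re, Complex.mul_im,
        Complex.sub_re, Complex.sub_im, Complex.ofReal_re, Complex.ofReal_im,
        Complex.I_re, Complex.I_im, Complex.neg_re, Complex.neg_im]
      rw [hjF]
      field_simp
      first
      | ring1
      | linear_combination (4 * F t ^ 3 * s ^ 2 * a t ^ 3) * hch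
      | linear_combination (2 * F t * a t ^ 3 * s - 4 * F t ^ 3 * s ^ 2 * a t ^ 3) * hch
      | linear_combination (-4 * F t ^ 3 * s ^ 2 * a t ^ 3) * hch
      | linear_combination (2 * F t * a t ^ 3 * s) * hch
end

section
/- For a spatially flat FRW spacetime with metric ds² = dt² − a(t)²(dx² + dy² + dz²), the mode function q_k(t) = (1/(√(2k) a(t))) e^{i k η(t)}, where η(t) = ∫_{t₀}^t a(τ)⁻¹ dτ is conformal time, solves the temporal Klein–Gordon equation q̈_k + 3H q̇_k + ω_k² q_k = 0 with ω_k² = k²/a² + m², provided the scale factor satisfies R = −6m², equivalently Ḣ + 2H² = m²; it also satisfies the normalization q̄_k q̇_k − q_k q̄̇_k = i a⁻³. -/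
/-- on a spatially flat FRW spacetime with `Ḣ + 2H² = m²` (i.e. `R = -6m²`),
the mode function `q_k(t) = e^{i k η(t)}/(√(2k) a(t))`, with `η` the conformal time, solves
the temporal Klein–Gordon equation and the Wronskian normalization condition. -/
theorem stmt_12 (a : ℝ → ℝ) (ha : ContDiff ℝ (⊤ : ℕ∞) a) (hapos : ∀ t, 0 < a t)
    (k m : ℝ) (hk : 0 < k) (hm : 0 ≤ m) (t₀ : ℝ)
    (hR : ∀ t, deriv (fun s => deriv a s / a s) t + 2 * (deriv a t / a t) ^ 2 = m ^ 2)
    (η : ℝ → ℝ) (hη : ∀ t, η t = ∫ τ in t₀..t, (a τ)⁻¹)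
    (q : ℝ → ℂ)
    (hq : ∀ t, q t = ((1 / (Real.sqrt (2 * k) * a t) : ℝ) : ℂ)
        * Complex.exp (Complex.I * ((k * η t : ℝ) : ℂ))) :
    ∀ t, (deriv (deriv q) t + ((3 * (deriv a t / a t) : ℝ) : ℂ) * deriv q t
        + ((k ^ 2 / a t ^ 2 + m ^ 2 : ℝ) : ℂ) * q t = 0) ∧
      (starRingEnd ℂ (q t) * deriv q t - q t * starRingEnd ℂ (deriv q t)
        = Complex.I / ((a t ^ 3 : ℝ) : ℂ)) := by
  -- abstract algebraic identities
  have key1 : ∀ (qt A A' kk mm : ℂ), A ≠ 0 →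
      qt * (Complex.I * kk * A⁻¹ - A'/A) * (Complex.I * kk * A⁻¹ - A'/A)
        + qt * (Complex.I * kk * (-A' / A ^ 2) - (mm ^ 2 - 2 * (A'/A) ^ 2))
        + 3 * (A'/A) * (qt * (Complex.I * kk * A⁻¹ - A'/A))
        + (kk ^ 2 / A ^ 2 + mm ^ 2) * qt = 0 := by
    intro qt A A' kk mm hA
    have h1 : A ^ 8 * A⁻¹ ^ 8 = 1 := by rw [← mul_pow, mul_inv_cancel₀ hA, one_pow]
    field_simp
    linear_combination qt * kk ^ 2 * Complex.I_sq
  have key2 : ∀ (s A A' θ kk : ℂ), s ≠ 0 → A ≠ 0 → s ^ 2 = 2 * kk →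
      1/(s*A) * Complex.exp (-(Complex.I*θ))
          * (1/(s*A) * Complex.exp (Complex.I*θ) * (Complex.I*kk*A⁻¹ - A'/A))
        - 1/(s*A) * Complex.exp (Complex.I*θ)
          * (1/(s*A) * Complex.exp (-(Complex.I*θ)) * (-(Complex.I*kk*A⁻¹) - A'/A))
        = Complex.I / A ^ 3 := by
    intro s A A' θ kk hs hA h2k
    have hE : Complex.exp (Complex.I*θ) * Complex.exp (-(Complex.I*θ)) = 1 := by
      rw [← Complex.exp_add]; simp
    calc 1/(s*A) * Complex.exp (-(Complex.I*θ))
          * (1/(s*A) * Complex.exp (Complex.I*θ) * (Complex.I*kk*A⁻¹ - A'/A))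
        - 1/(s*A) * Complex.exp (Complex.I*θ)
          * (1/(s*A) * Complex.exp (-(Complex.I*θ)) * (-(Complex.I*kk*A⁻¹) - A'/A))
        = (1/(s*A)) ^ 2 * (Complex.exp (Complex.I*θ) * Complex.exp (-(Complex.I*θ)))
            * (2*Complex.I*kk*A⁻¹) := by ring
      _ = (1/(s*A)) ^ 2 * (2*Complex.I*kk*A⁻¹) := by rw [hE, mul_one]
      _ = Complex.I / A ^ 3 := by
          field_simp
          linear_combination -h2k
  -- analytic setup
  have hane : ∀ s, a s ≠ 0 := fun s => (hapos s).ne'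
  have haC : ContDiff ℝ (⊤ : ℕ∞) a := ha.of_le (by simp)
  have hda : ∀ s, HasDerivAt a (deriv a s) s :=
    fun s => ((haC.differentiable (by simp)) s).hasDerivAt
  set B : ℝ → ℝ := fun s => deriv a s / a s with hBdef
  have hBd : ∀ s, DifferentiableAt ℝ B s := by
    intro s
    exact (((haC.iterate_deriv 1).differentiable (by simp)).differentiableAt).div
      ((haC.differentiable (by simp)).differentiableAt) (hane s)
  have hcont : Continuous fun τ => (a τ)⁻¹ := (haC.continuous).inv₀ hane
  have hηd : ∀ s, HasDerivAt η (a s)⁻¹ s := by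
    have hfun : η = fun u => ∫ τ in t₀..u, (a τ)⁻¹ := funext hη
    intro s
    rw [hfun]
    exact intervalIntegral.integral_hasDerivAt_right (hcont.intervalIntegrable _ _)
      (hcont.stronglyMeasurableAtFilter _ _) hcont.continuousAt
  -- derivative of q
  have hqd : ∀ s, HasDerivAt q
      (q s * (Complex.I * k * ((((a s)⁻¹ : ℝ)) : ℂ) - ((B s : ℝ) : ℂ))) s := by
    intro s
    have hqfun : q = fun u => ((Real.sqrt (2 * k) : ℝ) : ℂ)⁻¹ *
        (((((a u)⁻¹ : ℝ)) : ℂ) * Complex.exp (Complex.I * ((k * η u : ℝ) : ℂ))) := by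
      funext u
      rw [hq u]
      push_cast
      field_simp
    have h2 : HasDerivAt (fun u : ℝ => ((((a u)⁻¹ : ℝ)) : ℂ))
        ((-deriv a s / a s ^ 2 : ℝ) : ℂ) s := ((hda s).inv (hane s)).ofReal_comp
    have h3 : HasDerivAt (fun u : ℝ => ((k * η u : ℝ) : ℂ)) ((k * (a s)⁻¹ : ℝ) : ℂ) s :=
      ((hηd s).const_mul k).ofReal_comp
    have h4 : HasDerivAt (fun u : ℝ => Complex.I * ((k * η u : ℝ) : ℂ))
        (Complex.I * ((k * (a s)⁻¹ : ℝ) : ℂ)) s := h3.const_mul Complex.I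
    have h5 := h4.cexp
    have h6 := (h2.mul h5).const_mul (((Real.sqrt (2 * k) : ℝ) : ℂ))⁻¹
    rw [hqfun]
    convert h6 using 1
    case e'_4 => rfl
    case e'_8 => rfl
    have hBc : ((B s : ℝ) : ℂ) = ((deriv a s : ℝ) : ℂ) / ((a s : ℝ) : ℂ) := by
      rw [hBdef]; push_cast; ring
    rw [hBc]
    have hAne : ((a s : ℝ) : ℂ) ≠ 0 := by exact_mod_cast hane s
    push_cast
    simp only [div_eq_mul_inv, mul_inv, ← inv_pow]
    ring
  have hderiv_q : ∀ s, deriv q s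
      = q s * (Complex.I * k * ((((a s)⁻¹ : ℝ)) : ℂ) - ((B s : ℝ) : ℂ)) :=
    fun s => (hqd s).deriv
  intro t
  have hAne : ((a t : ℝ) : ℂ) ≠ 0 := by exact_mod_cast hane t
  have hBC : ((B t : ℝ) : ℂ) = ((deriv a t : ℝ) : ℂ) / ((a t : ℝ) : ℂ) := by
    rw [hBdef]; push_cast; ring
  constructor
  · -- Klein–Gordon equation
    have hfd : HasDerivAt
        (fun s => Complex.I * k * ((((a s)⁻¹ : ℝ)) : ℂ) - ((B s : ℝ) : ℂ))
        (Complex.I * k * ((-deriv a t / a t ^ 2 : ℝ) : ℂ) - ((deriv B t : ℝ) : ℂ)) t := by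
      have h2 : HasDerivAt (fun u : ℝ => ((((a u)⁻¹ : ℝ)) : ℂ))
          ((-deriv a t / a t ^ 2 : ℝ) : ℂ) t := ((hda t).inv (hane t)).ofReal_comp
      have h2' := h2.const_mul (Complex.I * (k : ℂ))
      have h3 : HasDerivAt (fun u : ℝ => ((B u : ℝ) : ℂ)) ((deriv B t : ℝ) : ℂ) t :=
        ((hBd t).hasDerivAt).ofReal_comp
      exact h2'.sub h3
    have hq2 : HasDerivAt (deriv q)
        (q t * (Complex.I * k * ((((a t)⁻¹ : ℝ)) : ℂ) - ((B t : ℝ) : ℂ))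
            * (Complex.I * k * ((((a t)⁻¹ : ℝ)) : ℂ) - ((B t : ℝ) : ℂ))
          + q t * (Complex.I * k * ((-deriv a t / a t ^ 2 : ℝ) : ℂ)
            - ((deriv B t : ℝ) : ℂ))) t := by
      have hmul := (hqd t).mul hfd
      have hfun : deriv q
          = fun s => q s * (Complex.I * k * ((((a s)⁻¹ : ℝ)) : ℂ) - ((B s : ℝ) : ℂ)) :=
        funext hderiv_q
      rw [hfun]
      exact hmul
    rw [hq2.deriv, hderiv_q t]
    have hB' : ((deriv B t : ℝ) : ℂ)
        = ((m : ℂ)) ^ 2 - 2 * (((deriv a t : ℝ) : ℂ) / ((a t : ℝ) : ℂ)) ^ 2 := by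
      have h : deriv B t = m ^ 2 - 2 * (deriv a t / a t) ^ 2 := by
        rw [hBdef]; linarith [hR t]
      rw [h]; push_cast; ring
    rw [hB', hBC]
    push_cast
    exact key1 (q t) _ _ _ _ hAne
  · -- Wronskian
    rw [hderiv_q t, hq t, hBC]
    have hsq : ((Real.sqrt (2 * k) : ℝ) : ℂ) ^ 2 = 2 * (k : ℂ) := by
      rw [← Complex.ofReal_pow, Real.sq_sqrt (by linarith : (0:ℝ) ≤ 2 * k)]
      push_cast; ring
    have hsne : ((Real.sqrt (2 * k) : ℝ) : ℂ) ≠ 0 := by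
      exact_mod_cast (Real.sqrt_pos.mpr (by linarith : (0:ℝ) < 2 * k)).ne'
    simp only [map_mul, map_sub, map_div₀, map_inv₀, Complex.conj_ofReal,
      ← Complex.exp_conj, Complex.conj_I, neg_mul]
    push_cast
    exact key2 ((Real.sqrt (2 * k) : ℝ) : ℂ) ((a t : ℝ) : ℂ) ((deriv a t : ℝ) : ℂ) ((k : ℂ) * ((η t : ℝ) : ℂ)) (k : ℂ) hsne hAne hsq
end
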